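/- Let L > 0 and let ρ : [−π, π] → ℝ be continuously differentiable. Define φ(x) = 1/(exp(2π/L) − 1) · [ exp((2π − x)/L)·∫_{−π}^{x} exp(y/L)·ρ(y) dy − exp(x/L)·∫_{−π}^{x} exp(−y/L)·ρ(y) dy − exp((2π + x)/L)·∫_{x}^{π} exp(−y/L)·ρ(y) dy + exp(−x/L)·∫_{x}^{π} exp(y/L)·ρ(y) dy ]. Then φ is twice differentiable on (−π, π) and satisfies φ''(x) = φ(x)/L² + 2·ρ'(x) for all x ∈ (−π, π). -/

import Mathlib

/-!
Split `phiConv L ρ` as `(u - v) / (exp (2π/L) - 1)`, where `u = expConvNeg L ρ` collects the two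
terms with integrand `exp (y/L) ρ y` and `v = expConvPos L ρ` the two with integrand
`exp (-y/L) ρ y`. By the fundamental theorem of calculus each half solves a first-order equation,
`u' = -u/L + (exp (2π/L) - 1) ρ` and `v' = v/L - (exp (2π/L) - 1) ρ`.
Hence `φ' = -(u + v) / (L (exp (2π/L) - 1)) + 2ρ`, and differentiating once more gives
`φ'' = (u - v) / (L² (exp (2π/L) - 1)) + 2ρ' = φ/L² + 2ρ'`.
-/

/-- Appendix B of the paper: the explicit expression of the circular convolution
of a density `ρ` with the repulsive interaction kernel. -/
noncomputable def phiConv (L : ℝ) (ρ : ℝ → ℝ) (x : ℝ) : ℝ :=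
  (1 / (Real.exp (2 * Real.pi / L) - 1)) *
    (Real.exp ((2 * Real.pi - x) / L) * (∫ y in (-Real.pi)..x, Real.exp (y / L) * ρ y)
      - Real.exp (x / L) * (∫ y in (-Real.pi)..x, Real.exp (-y / L) * ρ y)
      - Real.exp ((2 * Real.pi + x) / L) * (∫ y in x..Real.pi, Real.exp (-y / L) * ρ y)
      + Real.exp (-x / L) * (∫ y in x..Real.pi, Real.exp (y / L) * ρ y))

open Real

theorem Continuous.integral_hasDerivAt_left {E : Type*} [NormedAddCommGroup E]
    [NormedSpace ℝ E] [CompleteSpace E] {f : ℝ → E} (hf : Continuous f) (b x : ℝ) :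
    HasDerivAt (fun t => ∫ y in t..b, f y) (-f x) x :=
  intervalIntegral.integral_hasDerivAt_left (hf.intervalIntegrable x b)
    (hf.stronglyMeasurableAtFilter _ _) hf.continuousAt

noncomputable def expConvNeg (L : ℝ) (ρ : ℝ → ℝ) (x : ℝ) : ℝ :=
  exp ((2 * π - x) / L) * (∫ y in (-π)..x, exp (y / L) * ρ y)
    + exp (-x / L) * (∫ y in x..π, exp (y / L) * ρ y)

noncomputable def expConvPos (L : ℝ) (ρ : ℝ → ℝ) (x : ℝ) : ℝ :=
  exp (x / L) * (∫ y in (-π)..x, exp (-y / L) * ρ y)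
    + exp ((2 * π + x) / L) * (∫ y in x..π, exp (-y / L) * ρ y)

section

variable {L : ℝ} {ρ : ℝ → ℝ}

theorem phiConv_eq_sub_div :
    phiConv L ρ = fun x => (expConvNeg L ρ x - expConvPos L ρ x) / (exp (2 * π / L) - 1) := by
  ext x
  simp only [phiConv, expConvNeg, expConvPos]
  ring

theorem exp_two_pi_div_sub_one_ne_zero (hL : L ≠ 0) : exp (2 * π / L) - 1 ≠ 0 :=
  sub_ne_zero.mpr <| (exp_eq_one_iff _).not.mpr <| div_ne_zero (by positivity) hL

theorem hasDerivAt_expConvNeg (hρ : Continuous ρ) (x : ℝ) :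
    HasDerivAt (expConvNeg L ρ) (-expConvNeg L ρ x / L + (exp (2 * π / L) - 1) * ρ x) x := by
  have hg : Continuous fun y => exp (y / L) * ρ y := by fun_prop
  have h := ((((hasDerivAt_id' x).const_sub (2 * π)).div_const L).exp.mul
      (hg.integral_hasStrictDerivAt (-π) x).hasDerivAt).add
    ((((hasDerivAt_id' x).neg).div_const L).exp.mul (hg.integral_hasDerivAt_left π x))
  have h₁ : exp ((2 * π - x) / L) * exp (x / L) = exp (2 * π / L) := by
    rw [← exp_add]; congr 1; ring
  have h₂ : exp (-x / L) * exp (x / L) = 1 := by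
    rw [← exp_add, ← exp_zero]; congr 1; ring
  refine h.congr_deriv ?_
  unfold expConvNeg
  linear_combination ρ x * h₁ - ρ x * h₂

theorem hasDerivAt_expConvPos (hρ : Continuous ρ) (x : ℝ) :
    HasDerivAt (expConvPos L ρ) (expConvPos L ρ x / L - (exp (2 * π / L) - 1) * ρ x) x := by
  have hg : Continuous fun y => exp (-y / L) * ρ y := by fun_prop
  have h := (((hasDerivAt_id' x).div_const L).exp.mul
      (hg.integral_hasStrictDerivAt (-π) x).hasDerivAt).add
    ((((hasDerivAt_id' x).const_add (2 * π)).div_const L).exp.mul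
      (hg.integral_hasDerivAt_left π x))
  have h₁ : exp ((2 * π + x) / L) * exp (-x / L) = exp (2 * π / L) := by
    rw [← exp_add]; congr 1; ring
  have h₂ : exp (x / L) * exp (-x / L) = 1 := by
    rw [← exp_add, ← exp_zero]; congr 1; ring
  refine h.congr_deriv ?_
  unfold expConvPos
  linear_combination ρ x * h₂ - ρ x * h₁

theorem hasDerivAt_phiConv (hL : L ≠ 0) (hρ : Continuous ρ) (x : ℝ) :
    HasDerivAt (phiConv L ρ)
      (-(expConvNeg L ρ x + expConvPos L ρ x) / (L * (exp (2 * π / L) - 1)) + 2 * ρ x) x := by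
  rw [phiConv_eq_sub_div]
  refine (((hasDerivAt_expConvNeg hρ x).sub (hasDerivAt_expConvPos hρ x)).div_const _).congr_deriv
    ?_
  field_simp [exp_two_pi_div_sub_one_ne_zero hL]
  ring

theorem hasDerivAt_deriv_phiConv (hL : L ≠ 0) (hρ : Continuous ρ) {ρ' x : ℝ}
    (hρx : HasDerivAt ρ ρ' x) :
    HasDerivAt (deriv (phiConv L ρ)) (phiConv L ρ x / L ^ 2 + 2 * ρ') x := by
  rw [funext fun t => (hasDerivAt_phiConv hL hρ t).deriv, phiConv_eq_sub_div]
  refine ((((hasDerivAt_expConvNeg hρ x).add (hasDerivAt_expConvPos hρ x)).neg.div_const _).add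
    (hρx.const_mul 2)).congr_deriv ?_
  field_simp [exp_two_pi_div_sub_one_ne_zero hL]
  ring

end

/-- The deconvolution identity of Appendix B: `φ'' = φ/L² + 2ρ'` on `(-π, π)`. -/
theorem deconvolution_identity
    (L : ℝ) (hL : 0 < L) (ρ : ℝ → ℝ) (hρ : ContDiff ℝ 1 ρ) :
    (∀ x ∈ Set.Ioo (-Real.pi) Real.pi, DifferentiableAt ℝ (phiConv L ρ) x) ∧
    (∀ x ∈ Set.Ioo (-Real.pi) Real.pi,
      HasDerivAt (deriv (phiConv L ρ))
        (phiConv L ρ x / L ^ 2 + 2 * deriv ρ x) x) :=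
  ⟨fun x _ => (hasDerivAt_phiConv hL.ne' hρ.continuous x).differentiableAt,
    fun x _ => hasDerivAt_deriv_phiConv hL.ne' hρ.continuous
      (hρ.differentiable one_ne_zero x).hasDerivAt⟩
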